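/- arXiv:1511.06400 — 5 statements merged into one kernel-verified Lean document; each statement's English description precedes it below -/
import Mathlib

section
/- Let C ⊆ Θ be compact and let q ∈ Γ satisfy inf_{θ ∈ Θ∖C} ρ(q,θ) > ρ(q,θ*) for some θ* ∈ C, and suppose ρ(q,·) has a unique global minimizer θ₀ over Θ. Assume G and G′ are bounded on [−1,∞) and that θ ↦ p_k(θ) is continuous on C for each k. Let (q_n) ⊆ Γ with Σ_{k=0}^∞ |q_{n,k} − q_k| → 0 as n → ∞. Then for all sufficiently large n the map θ ↦ ρ(q_n,θ) attains a global minimum over Θ, and for any choice of global minimizers θ_n of ρ(q_n,·) one has θ_n → θ₀ (that is, the disparity functional T^ρ is continuous at q with respect to the ℓ¹ norm). -/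
open Filter Topology

/-- `q` is a probability distribution on the nonnegative integers. -/
def IsDistrib (q : ℕ → ℝ) : Prop := (∀ k, 0 ≤ q k) ∧ HasSum q 1

/-- The disparity measure `ρ(q,θ) = Σ_k G(q_k/p_k(θ) - 1) · p_k(θ)`. -/
noncomputable def disparity (G : ℝ → ℝ) (p : ℝ → ℕ → ℝ) (q : ℕ → ℝ) (θ : ℝ) : ℝ :=
  ∑' k, G (q k / p θ k - 1) * p θ k


lemma lipG {G : ℝ → ℝ} {M : ℝ} (hG3 : ContDiffOn ℝ 3 G (Set.Ici (-1)))
    (hM : ∀ t ∈ Set.Ici (-1:ℝ), |deriv G t| ≤ M) :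
    ∀ a b : ℝ, -1 ≤ a → -1 ≤ b → |G a - G b| ≤ M * |a - b| := by
  have key : ∀ a b : ℝ, -1 ≤ a → a < b → |G b - G a| ≤ M * |b - a| := by
    intro a b ha hab
    have hcont : ContinuousOn G (Set.Icc a b) :=
      hG3.continuousOn.mono (fun x hx => le_trans ha hx.1)
    have hdiff : DifferentiableOn ℝ G (Set.Ioo a b) := by
      intro x hx
      have hx1 : -1 < x := lt_of_le_of_lt ha hx.1
      exact ((hG3.contDiffAt (Ici_mem_nhds hx1)).differentiableAt
        (by norm_num)).differentiableWithinAt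
    obtain ⟨c, hc, hceq⟩ := exists_deriv_eq_slope G hab hcont hdiff
    have hc1 : (-1:ℝ) ≤ c := le_of_lt (lt_of_le_of_lt ha hc.1)
    have hba : 0 < b - a := by linarith
    have : G b - G a = deriv G c * (b - a) := by
      field_simp at hceq; linarith [hceq]
    rw [this, abs_mul, abs_of_pos hba]
    exact mul_le_mul_of_nonneg_right (hM c hc1) (le_of_lt hba)
  intro a b ha hb
  rcases lt_trichotomy a b with h | h | h
  · rw [abs_sub_comm, abs_sub_comm a b]; exact key a b ha h
  · simp [h]
  · exact key b a hb h

lemma term_abs_le {G : ℝ → ℝ} {M : ℝ} (hM : ∀ t ∈ Set.Ici (-1:ℝ), |G t| ≤ M)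
    {r : ℕ → ℝ} (hr : ∀ k, 0 ≤ r k) {pθ : ℕ → ℝ} (hpθ : ∀ k, 0 < pθ k) (k : ℕ) :
    |G (r k / pθ k - 1) * pθ k| ≤ M * pθ k := by
  rw [abs_mul, abs_of_pos (hpθ k)]
  refine mul_le_mul_of_nonneg_right (hM _ ?_) (hpθ k).le
  simp only [Set.mem_Ici]
  have : 0 ≤ r k / pθ k := div_nonneg (hr k) (hpθ k).le
  linarith

lemma summable_term {G : ℝ → ℝ} {M : ℝ} (hM : ∀ t ∈ Set.Ici (-1:ℝ), |G t| ≤ M)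
    {r : ℕ → ℝ} (hr : ∀ k, 0 ≤ r k) {pθ : ℕ → ℝ} (hpθ : ∀ k, 0 < pθ k)
    (hps : Summable pθ) :
    Summable (fun k => G (r k / pθ k - 1) * pθ k) := by
  apply Summable.of_norm
  apply Summable.of_nonneg_of_le (fun k => norm_nonneg _)
    (fun k => term_abs_le hM hr hpθ k) (hps.mul_left M)

/-- uniform closeness of disparities -/
lemma disparity_close {G : ℝ → ℝ} {M : ℝ}
    (hlip : ∀ a b : ℝ, -1 ≤ a → -1 ≤ b → |G a - G b| ≤ M * |a - b|)
    (hM : ∀ t ∈ Set.Ici (-1:ℝ), |G t| ≤ M)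
    {r r' : ℕ → ℝ} (hr : IsDistrib r) (hr' : IsDistrib r')
    {pθ : ℕ → ℝ} (hpθ : ∀ k, 0 < pθ k) (hps : Summable pθ) :
    |(∑' k, G (r k / pθ k - 1) * pθ k) - ∑' k, G (r' k / pθ k - 1) * pθ k|
      ≤ M * ∑' k, |r k - r' k| := by
  have hs1 := summable_term hM hr.1 hpθ hps
  have hs2 := summable_term hM hr'.1 hpθ hps
  have hsd : Summable (fun k => |r k - r' k|) := (hr.2.summable.sub hr'.2.summable).abs
  rw [← Summable.tsum_sub hs1 hs2]
  have hbd : ∀ k, |G (r k / pθ k - 1) * pθ k - G (r' k / pθ k - 1) * pθ k|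
      ≤ M * |r k - r' k| := by
    intro k
    have h1 : (0:ℝ) ≤ r k / pθ k := div_nonneg (hr.1 k) (hpθ k).le
    have h2 : (0:ℝ) ≤ r' k / pθ k := div_nonneg (hr'.1 k) (hpθ k).le
    have := hlip (r k / pθ k - 1) (r' k / pθ k - 1) (by linarith) (by linarith)
    calc |G (r k / pθ k - 1) * pθ k - G (r' k / pθ k - 1) * pθ k|
        = |G (r k / pθ k - 1) - G (r' k / pθ k - 1)| * pθ k := by
          rw [← sub_mul, abs_mul, abs_of_pos (hpθ k)]
      _ ≤ (M * |r k / pθ k - 1 - (r' k / pθ k - 1)|) * pθ k :=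
          mul_le_mul_of_nonneg_right this (hpθ k).le
      _ = M * |r k - r' k| := by
          have : r k / pθ k - 1 - (r' k / pθ k - 1) = (r k - r' k) / pθ k := by ring
          rw [this, abs_div, abs_of_pos (hpθ k)]
          rw [mul_assoc, div_mul_cancel₀ _ (hpθ k).ne']
  calc |∑' k, (G (r k / pθ k - 1) * pθ k - G (r' k / pθ k - 1) * pθ k)|
      ≤ ∑' k, |G (r k / pθ k - 1) * pθ k - G (r' k / pθ k - 1) * pθ k| := by
        simpa using norm_tsum_le_tsum_norm (f := fun k => G (r k / pθ k - 1) * pθ k - G (r' k / pθ k - 1) * pθ k)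
          (by simpa [Real.norm_eq_abs] using
            (Summable.of_nonneg_of_le (fun k => abs_nonneg _) hbd (hsd.mul_left M)))
    _ ≤ ∑' k, M * |r k - r' k| := Summable.tsum_le_tsum hbd
          (Summable.of_nonneg_of_le (fun k => abs_nonneg _) hbd (hsd.mul_left M))
          (hsd.mul_left M)
    _ = M * ∑' k, |r k - r' k| := tsum_mul_left

lemma term_abs_le' {G : ℝ → ℝ} {M : ℝ} (hM : ∀ t ∈ Set.Ici (-1:ℝ), |G t| ≤ M)
    {r : ℕ → ℝ} (hr : ∀ k, 0 ≤ r k) {pθ : ℕ → ℝ} (hpθ : ∀ k, 0 < pθ k) (k : ℕ) :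
    |G (r k / pθ k - 1) * pθ k| ≤ M * pθ k := by
  rw [abs_mul, abs_of_pos (hpθ k)]
  refine mul_le_mul_of_nonneg_right (hM _ ?_) (hpθ k).le
  simp only [Set.mem_Ici]
  have : 0 ≤ r k / pθ k := div_nonneg (hr k) (hpθ k).le
  linarith

lemma summable_term' {G : ℝ → ℝ} {M : ℝ} (hM : ∀ t ∈ Set.Ici (-1:ℝ), |G t| ≤ M)
    {r : ℕ → ℝ} (hr : ∀ k, 0 ≤ r k) {pθ : ℕ → ℝ} (hpθ : ∀ k, 0 < pθ k)
    (hps : Summable pθ) :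
    Summable (fun k => G (r k / pθ k - 1) * pθ k) :=
  Summable.of_norm (Summable.of_nonneg_of_le (fun k => norm_nonneg _)
    (fun k => term_abs_le' hM hr hpθ k) (hps.mul_left M))

lemma abs_tsum_le_of_le {ι : Type*} {f g : ι → ℝ} (h : ∀ i, |f i| ≤ g i)
    (hg : Summable g) : |∑' i, f i| ≤ ∑' i, g i := by
  have habs : Summable fun i => |f i| :=
    Summable.of_nonneg_of_le (fun i => abs_nonneg _) h hg
  have hf : Summable f := Summable.of_norm (by simpa [Real.norm_eq_abs] using habs)
  calc |∑' i, f i| ≤ ∑' i, |f i| := by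
        simpa [Real.norm_eq_abs] using norm_tsum_le_tsum_norm (f := f)
          (by simpa [Real.norm_eq_abs] using habs)
    _ ≤ ∑' i, g i := Summable.tsum_le_tsum h habs hg

lemma disparity_contOn {G : ℝ → ℝ} {M : ℝ} {p : ℝ → ℕ → ℝ} {r : ℕ → ℝ} {C : Set ℝ}
    (hGc : ContinuousOn G (Set.Ici (-1)))
    (hM : ∀ t ∈ Set.Ici (-1:ℝ), |G t| ≤ M)
    (hr : ∀ k, 0 ≤ r k)
    (hppos : ∀ θ ∈ C, ∀ k, 0 < p θ k)
    (hpsum : ∀ θ ∈ C, HasSum (p θ) 1)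
    (hpcont : ∀ k, ContinuousOn (fun θ => p θ k) C) :
    ContinuousOn (disparity G p r) C := by
  have hM0 : 0 ≤ M := le_trans (abs_nonneg _) (hM (-1) (Set.mem_Ici.mpr le_rfl))
  -- tail bound
  have htail : ∀ N : ℕ, ∀ θ ∈ C,
      |disparity G p r θ - ∑ k ∈ Finset.range N, G (r k / p θ k - 1) * p θ k|
        ≤ M * (1 - ∑ k ∈ Finset.range N, p θ k) := by
    intro N θ hθ
    have hps : Summable (p θ) := (hpsum θ hθ).summable
    have hsum := summable_term' hM hr (hppos θ hθ) hps
    have key := Summable.sum_add_tsum_compl (s := Finset.range N) hsum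
    have keyp := Summable.sum_add_tsum_compl (s := Finset.range N) hps
    rw [(hpsum θ hθ).tsum_eq] at keyp
    have h1 : disparity G p r θ - ∑ k ∈ Finset.range N, G (r k / p θ k - 1) * p θ k
        = ∑' (k : ↑((↑(Finset.range N) : Set ℕ)ᶜ)), G (r ↑k / p θ ↑k - 1) * p θ ↑k := by
      rw [disparity, ← key]; ring
    have h2 : (1:ℝ) - ∑ k ∈ Finset.range N, p θ k
        = ∑' (k : ↑((↑(Finset.range N) : Set ℕ)ᶜ)), p θ ↑k := by
      rw [← keyp]; ring
    rw [h1, h2]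
    have hpc : Summable (fun k : ↑((↑(Finset.range N) : Set ℕ)ᶜ) => p θ ↑k) :=
      hps.subtype _
    calc |∑' (k : ↑((↑(Finset.range N) : Set ℕ)ᶜ)), G (r ↑k / p θ ↑k - 1) * p θ ↑k|
        ≤ ∑' (k : ↑((↑(Finset.range N) : Set ℕ)ᶜ)), M * p θ ↑k :=
          abs_tsum_le_of_le (fun k => term_abs_le' hM hr (hppos θ hθ) k.1)
            (hpc.mul_left M)
      _ = M * ∑' (k : ↑((↑(Finset.range N) : Set ℕ)ᶜ)), p θ ↑k := tsum_mul_left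
  intro θ' hθ'
  rw [ContinuousWithinAt, Metric.tendsto_nhds]
  intro ε hε
  have hε' : 0 < ε / (4 * (M + 1)) := by positivity
  set ε' := ε / (4 * (M + 1)) with hε'def
  -- choose N
  have htd : Tendsto (fun N => ∑ k ∈ Finset.range N, p θ' k) atTop (𝓝 1) :=
    (hpsum θ' hθ').tendsto_sum_nat
  have : ∀ᶠ N in atTop, 1 - ε' < ∑ k ∈ Finset.range N, p θ' k :=
    htd.eventually_const_lt (by linarith)
  obtain ⟨N, hN⟩ := this.exists
  -- continuity of the finite pieces
  have hppos' := hppos θ' hθ'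
  have hF : ContinuousWithinAt
      (fun θ => ∑ k ∈ Finset.range N, G (r k / p θ k - 1) * p θ k) C θ' := by
    refine (continuousOn_finset_sum _ (fun k _ => ?_)).continuousWithinAt hθ'
    have hdiv : ContinuousOn (fun θ => r k / p θ k - 1) C :=
      (continuousOn_const.div (hpcont k) (fun θ hθ => (hppos θ hθ k).ne')).sub
        continuousOn_const
    have hmem : Set.MapsTo (fun θ => r k / p θ k - 1) C (Set.Ici (-1:ℝ)) := by
      intro θ hθ
      have : 0 ≤ r k / p θ k := div_nonneg (hr k) (hppos θ hθ k).le
      simp only [Set.mem_Ici]; linarith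
    exact (hGc.comp hdiv hmem).mul (hpcont k)
  have hS : ContinuousWithinAt (fun θ => ∑ k ∈ Finset.range N, p θ k) C θ' :=
    (continuousOn_finset_sum _ (fun k _ => hpcont k)).continuousWithinAt hθ'
  -- eventual estimates
  have e1 : ∀ᶠ θ in 𝓝[C] θ',
      |(∑ k ∈ Finset.range N, G (r k / p θ k - 1) * p θ k) -
        ∑ k ∈ Finset.range N, G (r k / p θ' k - 1) * p θ' k| < ε / 4 := by
    have := Metric.tendsto_nhds.1 hF (ε/4) (by linarith)
    simpa [Real.dist_eq] using this
  have e2 : ∀ᶠ θ in 𝓝[C] θ',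
      |(∑ k ∈ Finset.range N, p θ k) - ∑ k ∈ Finset.range N, p θ' k| < ε' := by
    have := Metric.tendsto_nhds.1 hS ε' hε'
    simpa [Real.dist_eq] using this
  have e3 : ∀ᶠ θ in 𝓝[C] θ', θ ∈ C := eventually_mem_nhdsWithin
  filter_upwards [e1, e2, e3] with θ h1 h2 hθC
  rw [Real.dist_eq]
  have t1 := htail N θ hθC
  have t2 := htail N θ' hθ'
  have hSle : ∀ τ ∈ C, ∑ k ∈ Finset.range N, p τ k ≤ 1 := by
    intro τ hτ
    exact sum_le_hasSum _ (fun k _ => (hppos τ hτ k).le) (hpsum τ hτ)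
  have hA : 1 - ∑ k ∈ Finset.range N, p θ' k < ε' := by linarith
  have hA2 : 1 - ∑ k ∈ Finset.range N, p θ k < 2 * ε' := by
    have := abs_lt.1 h2
    linarith
  have hMε : M * ε' ≤ ε / 4 := by
    have heq : (M + 1) * ε' = ε / 4 := by
      rw [hε'def]; field_simp
    nlinarith [hε'.le]
  have b1 : M * (1 - ∑ k ∈ Finset.range N, p θ k) ≤ 2 * (ε/4) := by nlinarith
  have b2 : M * (1 - ∑ k ∈ Finset.range N, p θ' k) ≤ ε / 4 := by nlinarith
  have habs := abs_sub_abs_le_abs_sub (disparity G p r θ) (disparity G p r θ')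
  calc |disparity G p r θ - disparity G p r θ'|
      ≤ |disparity G p r θ - ∑ k ∈ Finset.range N, G (r k / p θ k - 1) * p θ k|
        + |(∑ k ∈ Finset.range N, G (r k / p θ k - 1) * p θ k) -
            ∑ k ∈ Finset.range N, G (r k / p θ' k - 1) * p θ' k|
        + |(∑ k ∈ Finset.range N, G (r k / p θ' k - 1) * p θ' k) - disparity G p r θ'| := by
          have := abs_sub_le (disparity G p r θ)
            (∑ k ∈ Finset.range N, G (r k / p θ k - 1) * p θ k) (disparity G p r θ')
          have := abs_sub_le (∑ k ∈ Finset.range N, G (r k / p θ k - 1) * p θ k)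
            (∑ k ∈ Finset.range N, G (r k / p θ' k - 1) * p θ' k) (disparity G p r θ')
          linarith [abs_sub_le (disparity G p r θ)
            (∑ k ∈ Finset.range N, G (r k / p θ k - 1) * p θ k) (disparity G p r θ')]
    _ < ε := by
        rw [abs_sub_comm (∑ k ∈ Finset.range N, G (r k / p θ' k - 1) * p θ' k)] at *
        linarith


/-- continuity of the disparity functional `T^ρ` at `q` with respect to the
`ℓ¹` norm: if `q_n → q` in `ℓ¹`, then the minimizers of `ρ(q_n,·)` eventually exist and
converge to the unique minimizer `θ₀` of `ρ(q,·)`. -/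
theorem stmt_3
    (Θ : Set ℝ) (p : ℝ → ℕ → ℝ) (G : ℝ → ℝ) (q : ℕ → ℝ) (C : Set ℝ) (θs θ₀ : ℝ)
    (qn : ℕ → ℕ → ℝ)
    (hp : ∀ θ ∈ Θ, IsDistrib (p θ)) (hppos : ∀ θ ∈ Θ, ∀ k, 0 < p θ k)
    (hG3 : ContDiffOn ℝ 3 G (Set.Ici (-1)))
    (hGconv : StrictConvexOn ℝ (Set.Ici (-1)) G) (hG0 : G 0 = 0)
    (hq : IsDistrib q) (hqn : ∀ n, IsDistrib (qn n))
    (hC : IsCompact C) (hCsub : C ⊆ Θ) (hθs : θs ∈ C)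
    (hinf : ∃ c, disparity G p q θs < c ∧ ∀ θ ∈ Θ \ C, c ≤ disparity G p q θ)
    (hθ₀ : θ₀ ∈ Θ) (hθ₀min : ∀ θ ∈ Θ, disparity G p q θ₀ ≤ disparity G p q θ)
    (hθ₀uniq : ∀ θ₁ ∈ Θ, (∀ θ ∈ Θ, disparity G p q θ₁ ≤ disparity G p q θ) → θ₁ = θ₀)
    (hGbdd : ∃ M, ∀ t ∈ Set.Ici (-1:ℝ), |G t| ≤ M ∧ |deriv G t| ≤ M)
    (hpcont : ∀ k, ContinuousOn (fun θ => p θ k) C)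
    (hl1 : Tendsto (fun n => ∑' k, |qn n k - q k|) atTop (𝓝 0)) :
    (∀ᶠ n in atTop, ∃ θ ∈ Θ, ∀ t ∈ Θ, disparity G p (qn n) θ ≤ disparity G p (qn n) t) ∧
    ∀ θn : ℕ → ℝ,
      (∀ᶠ n in atTop, θn n ∈ Θ ∧
        ∀ t ∈ Θ, disparity G p (qn n) (θn n) ≤ disparity G p (qn n) t) →
      Tendsto θn atTop (𝓝 θ₀) := by
  classical
  obtain ⟨M, hMb⟩ := hGbdd
  have hMG : ∀ t ∈ Set.Ici (-1:ℝ), |G t| ≤ M := fun t ht => (hMb t ht).1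
  have hM0 : 0 ≤ M := le_trans (abs_nonneg _) (hMG (-1) (Set.mem_Ici.mpr le_rfl))
  have hlip := lipG hG3 (fun t ht => (hMb t ht).2)
  -- uniform closeness
  have hclose : ∀ n, ∀ θ ∈ Θ,
      |disparity G p (qn n) θ - disparity G p q θ| ≤ M * ∑' k, |qn n k - q k| := by
    intro n θ hθ
    simpa [disparity] using disparity_close hlip hMG (hqn n) hq
      (hppos θ hθ) (hp θ hθ).2.summable
  -- continuity on C
  have hcont : ∀ r : ℕ → ℝ, IsDistrib r → ContinuousOn (disparity G p r) C := by
    intro r hr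
    exact disparity_contOn hG3.continuousOn hMG hr.1
      (fun θ hθ => hppos θ (hCsub hθ)) (fun θ hθ => (hp θ (hCsub hθ)).2) hpcont
  obtain ⟨c, hc1, hc2⟩ := hinf
  set ε := (c - disparity G p q θs) / 3 with hεdef
  have hεpos : 0 < ε := by simp only [hεdef]; linarith
  have hDn : Tendsto (fun n => M * ∑' k, |qn n k - q k|) atTop (𝓝 0) := by
    simpa using hl1.const_mul M
  have hev : ∀ᶠ n in atTop, M * (∑' k, |qn n k - q k|) < ε :=
    hDn.eventually_lt_const hεpos
  -- key: for good n, a minimizer over C is a global minimizer over Θ, and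
  -- any global minimizer over Θ lies in C
  have hρsΘ : θs ∈ Θ := hCsub hθs
  have main : ∀ n, M * (∑' k, |qn n k - q k|) < ε →
      ∃ θ ∈ C, ∀ t ∈ Θ, disparity G p (qn n) θ ≤ disparity G p (qn n) t := by
    intro n hn
    obtain ⟨θm, hθmC, hθmmin⟩ := hC.exists_isMinOn ⟨θs, hθs⟩ (hcont (qn n) (hqn n))
    refine ⟨θm, hθmC, fun t ht => ?_⟩
    by_cases htC : t ∈ C
    · exact hθmmin htC
    · have h1 : disparity G p (qn n) θm ≤ disparity G p (qn n) θs := hθmmin hθs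
      have h2 := abs_sub_le_iff.1 (hclose n θs hρsΘ)
      have h3 := abs_sub_le_iff.1 (hclose n t ht)
      have h4 : c ≤ disparity G p q t := hc2 t ⟨ht, htC⟩
      have h5 : disparity G p q θs = c - 3 * ε := by simp only [hεdef]; ring
      linarith [h2.1, h3.2]
  have hinC : ∀ n, M * (∑' k, |qn n k - q k|) < ε → ∀ θ ∈ Θ,
      (∀ t ∈ Θ, disparity G p (qn n) θ ≤ disparity G p (qn n) t) → θ ∈ C := by
    intro n hn θ hθ hmin
    by_contra hθC
    have h1 : disparity G p (qn n) θ ≤ disparity G p (qn n) θs := hmin θs hρsΘ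
    have h2 := abs_sub_le_iff.1 (hclose n θs hρsΘ)
    have h3 := abs_sub_le_iff.1 (hclose n θ hθ)
    have h4 : c ≤ disparity G p q θ := hc2 θ ⟨hθ, hθC⟩
    have h5 : disparity G p q θs = c - 3 * ε := by simp only [hεdef]; ring
    linarith [h2.1, h3.2]
  constructor
  · filter_upwards [hev] with n hn
    obtain ⟨θ, hθC, hmin⟩ := main n hn
    exact ⟨θ, hCsub hθC, hmin⟩
  · intro θn hθn
    rw [tendsto_nhds]
    intro U hUo hU0
    show ∀ᶠ n in atTop, θn n ∈ U
    rcases Set.eq_empty_or_nonempty (C \ U) with hKe | hKne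
    · -- C ⊆ U
      have hCU : C ⊆ U := by
        intro x hx
        by_contra hxU
        exact Set.eq_empty_iff_forall_notMem.1 hKe x ⟨hx, hxU⟩
      filter_upwards [hθn, hev] with n hn hlt
      exact hCU (hinC n hlt (θn n) hn.1 hn.2)
    · -- minimum of ρ(q,·) on the compact set C \ U
      have hK : IsCompact (C \ U) := hC.diff hUo
      obtain ⟨θK, hθKK, hθKmin⟩ := hK.exists_isMinOn hKne
        ((hcont q hq).mono Set.diff_subset)
      have hθKΘ : θK ∈ Θ := hCsub hθKK.1
      have hm : disparity G p q θ₀ < disparity G p q θK := by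
        rcases lt_or_ge (disparity G p q θ₀) (disparity G p q θK) with h | h
        · exact h
        · exfalso
          have : θK = θ₀ := hθ₀uniq θK hθKΘ
            (fun t ht => le_trans h (hθ₀min t ht))
          exact hθKK.2 (this ▸ hU0)
      set η := (disparity G p q θK - disparity G p q θ₀) / 3 with hηdef
      have hηpos : 0 < η := by simp only [hηdef]; linarith
      have hev2 : ∀ᶠ n in atTop, M * (∑' k, |qn n k - q k|) < min ε η :=
        hDn.eventually_lt_const (lt_min hεpos hηpos)
      filter_upwards [hθn, hev2] with n hn hlt
      have hBε : M * (∑' k, |qn n k - q k|) < ε := lt_of_lt_of_le hlt (min_le_left _ _)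
      have hBη : M * (∑' k, |qn n k - q k|) < η := lt_of_lt_of_le hlt (min_le_right _ _)
      have hnC : θn n ∈ C := hinC n hBε (θn n) hn.1 hn.2
      by_contra hnU
      -- then θn n ∈ C \ U, so ρ(q, θn n) ≥ ρ(q, θK)
      have hge : disparity G p q θK ≤ disparity G p q (θn n) := hθKmin ⟨hnC, hnU⟩
      have h1 := abs_sub_le_iff.1 (hclose n (θn n) hn.1)
      have h2 := abs_sub_le_iff.1 (hclose n θ₀ hθ₀)
      have h3 : disparity G p (qn n) (θn n) ≤ disparity G p (qn n) θ₀ := hn.2 θ₀ hθ₀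
      have h5 : disparity G p q θK = disparity G p q θ₀ + 3 * η := by
        simp only [hηdef]; ring
      linarith [h1.2, h2.1]
end

section
/- Let C ⊆ Θ be compact and let q ∈ Γ satisfy inf_{θ ∈ Θ∖C} HD(q,θ) > HD(q,θ*) for some θ* ∈ C, and suppose HD(q,·) has a unique global minimizer θ₀ over Θ. Assume θ ↦ p_k(θ) is continuous on C for each k. Let (q_n) ⊆ Γ with Σ_{k=0}^∞ (q_{n,k}^{1/2} − q_k^{1/2})² → 0 as n → ∞. Then for all sufficiently large n the map θ ↦ HD(q_n,θ) attains a global minimum over Θ, and for any choice of global minimizers θ_n of HD(q_n,·) one has θ_n → θ₀. -/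
open Filter Topology

/-- The squared Hellinger distance `HD(q,θ) = Σ_k (q_k^{1/2} - p_k(θ)^{1/2})²`. -/
noncomputable def HDdist (p : ℝ → ℕ → ℝ) (q : ℕ → ℝ) (θ : ℝ) : ℝ :=
  ∑' k, (Real.sqrt (q k) - Real.sqrt (p θ k))^2

/-!
Taking square roots maps distributions into the unit sphere of `ℓ²`, where
`HD(q,θ) = ‖√q - √p(θ)‖² = 2 - 2⟪√q, √p(θ)⟫`. Hence `|HD(qₙ,θ) - HD(q,θ)| ≤ 2‖√qₙ - √q‖`, so
`HD(qₙ,·) → HD(q,·)` uniformly on `Θ`; and `HD(r,·)` is continuous on `C` because `⟪√r, ·⟫` is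
a uniform limit of finite sums on the unit sphere. Once the uniform error is below half the gap
`c - HD(q,θ*)`, every `θ` with `HD(qₙ,θ) ≤ HD(qₙ,θ*)` lies in `C`: a minimizer of `HD(qₙ,·)` on
the compact `C` is then a global one, and all global minimizers stay in `C`. Their values
`HD(q,θₙ)` tend to `HD(q,θ₀)`, and on the compact `C` the strict minimum at `θ₀` turns this into
`θₙ → θ₀`.
-/

section lpInner

variable {ι β 𝕜 : Type*} [RCLike 𝕜] {G : ι → Type*} [∀ i, NormedAddCommGroup (G i)]
  [∀ i, InnerProductSpace 𝕜 (G i)] [TopologicalSpace β]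

theorem lp.continuous_inner_of_continuous_apply {u : β → lp G 2} {M : ℝ}
    (hu : ∀ i, Continuous fun b => u b i) (hM : ∀ b, ‖u b‖ ≤ M) (v : lp G 2) :
    Continuous fun b => inner 𝕜 v (u b) := by
  classical
  refine TendstoUniformly.continuous (p := (atTop : Filter (Finset ι)))
    (F := fun s b => inner 𝕜 (∑ i ∈ s, lp.single 2 i (v i)) (u b)) ?_
    (Frequently.of_forall fun s => ?_)
  · rw [Metric.tendstoUniformly_iff]
    intro ε hε
    have hnorm := (tendsto_iff_norm_sub_tendsto_zero.1 (lp.hasSum_single ENNReal.ofNat_ne_top v)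
      ).mul_const M
    rw [zero_mul] at hnorm
    filter_upwards [hnorm.eventually (gt_mem_nhds hε)] with s hs b
    rw [dist_comm, dist_eq_norm, ← inner_sub_left]
    calc ‖inner 𝕜 (∑ i ∈ s, lp.single 2 i (v i) - v) (u b)‖
        ≤ ‖∑ i ∈ s, lp.single 2 i (v i) - v‖ * ‖u b‖ := norm_inner_le_norm _ _
      _ ≤ ‖∑ i ∈ s, lp.single 2 i (v i) - v‖ * M := by gcongr; exact hM b
      _ < ε := hs
  · simp only [sum_inner, lp.inner_single_left]
    exact continuous_finsetSum _ fun i _ => continuous_const.inner (hu i)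

theorem lp.norm_sq_eq_tsum (x : lp (fun _ : ι => ℝ) 2) : ‖x‖ ^ 2 = ∑' i, x i ^ 2 := by
  rw [← real_inner_self_eq_norm_sq, lp.inner_eq_tsum]
  simp [sq]

end lpInner

namespace IsDistrib

variable {q r : ℕ → ℝ}

theorem memℓp_sqrt (hq : IsDistrib q) : Memℓp (fun k => √(q k)) 2 := by
  refine memℓp_gen ?_
  simpa [Real.sq_sqrt (hq.1 _)] using hq.2.summable

noncomputable def sqrtVec (hq : IsDistrib q) : lp (fun _ : ℕ => ℝ) 2 :=
  ⟨fun k => √(q k), hq.memℓp_sqrt⟩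

@[simp]
theorem sqrtVec_apply (hq : IsDistrib q) (k : ℕ) : hq.sqrtVec k = √(q k) := rfl

theorem norm_sqrtVec (hq : IsDistrib q) : ‖hq.sqrtVec‖ = 1 := by
  have h := lp.norm_sq_eq_tsum hq.sqrtVec
  simp only [sqrtVec_apply, Real.sq_sqrt (hq.1 _), hq.2.tsum_eq] at h
  rw [← Real.sqrt_sq (norm_nonneg _), h, Real.sqrt_one]

theorem tsum_sq_sqrt_sub_sqrt (hq : IsDistrib q) (hr : IsDistrib r) :
    ∑' k, (√(q k) - √(r k)) ^ 2 = ‖hq.sqrtVec - hr.sqrtVec‖ ^ 2 := by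
  rw [lp.norm_sq_eq_tsum]
  rfl

end IsDistrib

section Hellinger

variable {ι : Type*} {p : ℝ → ℕ → ℝ} {q r : ℕ → ℝ} {θ : ℝ}

theorem HDdist_eq_two_sub_inner (hq : IsDistrib q) (hpθ : IsDistrib (p θ)) :
    HDdist p q θ = 2 - 2 * inner ℝ hq.sqrtVec hpθ.sqrtVec := by
  rw [HDdist, hq.tsum_sq_sqrt_sub_sqrt hpθ, norm_sub_sq_real, hq.norm_sqrtVec, hpθ.norm_sqrtVec]
  ring

theorem dist_HDdist_le (hq : IsDistrib q) (hr : IsDistrib r) (hpθ : IsDistrib (p θ)) :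
    dist (HDdist p q θ) (HDdist p r θ) ≤ 2 * √(∑' k, (√(r k) - √(q k)) ^ 2) := by
  have h := abs_real_inner_le_norm (hr.sqrtVec - hq.sqrtVec) hpθ.sqrtVec
  rw [inner_sub_left, hpθ.norm_sqrtVec, mul_one, abs_le] at h
  rw [HDdist_eq_two_sub_inner hq hpθ, HDdist_eq_two_sub_inner hr hpθ,
    hr.tsum_sq_sqrt_sub_sqrt hq, Real.sqrt_sq (norm_nonneg _), Real.dist_eq, abs_le]
  constructor <;> linarith [h.1, h.2]

theorem tendstoUniformlyOn_HDdist {l : Filter ι} {Θ : Set ℝ} {qn : ι → ℕ → ℝ}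
    (hp : ∀ θ ∈ Θ, IsDistrib (p θ)) (hq : IsDistrib q) (hqn : ∀ n, IsDistrib (qn n))
    (hl2 : Tendsto (fun n => ∑' k, (√(qn n k) - √(q k)) ^ 2) l (𝓝 0)) :
    TendstoUniformlyOn (fun n => HDdist p (qn n)) (HDdist p q) l Θ := by
  rw [Metric.tendstoUniformlyOn_iff]
  intro ε hε
  have hδ : Tendsto (fun n => 2 * √(∑' k, (√(qn n k) - √(q k)) ^ 2)) l (𝓝 0) := by
    simpa using hl2.sqrt.const_mul 2
  filter_upwards [hδ.eventually (gt_mem_nhds hε)] with n hn θ hθ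
  exact (dist_HDdist_le hq (hqn n) (hp θ hθ)).trans_lt hn

theorem continuousOn_HDdist {C : Set ℝ} (hp : ∀ θ ∈ C, IsDistrib (p θ))
    (hpcont : ∀ k, ContinuousOn (fun θ => p θ k) C) (hr : IsDistrib r) :
    ContinuousOn (HDdist p r) C := by
  rw [continuousOn_iff_continuous_domRestrict]
  have hinner : Continuous fun θ : C => inner ℝ hr.sqrtVec (hp θ θ.2).sqrtVec :=
    lp.continuous_inner_of_continuous_apply (fun k => (hpcont k).domRestrict.sqrt)
      (fun θ : C => (hp θ θ.2).norm_sqrtVec.le) hr.sqrtVec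
  convert continuous_const.sub (continuous_const.mul hinner) using 1
  ext θ
  exact HDdist_eq_two_sub_inner hr (hp θ θ.2)

end Hellinger

section ArgminStability

variable {α ι : Type*} {f : α → ℝ} {F : ι → α → ℝ} {Θ C : Set α} {l : Filter ι} {θs θ₀ : α}
  {c : ℝ}

theorem TendstoUniformlyOn.eventually_mem_of_apply_le (hF : TendstoUniformlyOn F f l Θ)
    (hθs : θs ∈ Θ) (hc : f θs < c) (hcC : ∀ θ ∈ Θ \ C, c ≤ f θ) :
    ∀ᶠ i in l, ∀ θ ∈ Θ, F i θ ≤ F i θs → θ ∈ C := by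
  have hε : 0 < (c - f θs) / 2 := by linarith
  filter_upwards [Metric.tendstoUniformlyOn_iff.1 hF _ hε] with i hi θ hθ hle
  by_contra hθC
  have hθ' := abs_lt.1 (hi θ hθ)
  have hθs' := abs_lt.1 (hi θs hθs)
  linarith [hcC θ ⟨hθ, hθC⟩]

theorem TendstoUniformlyOn.eventually_exists_isMinOn [TopologicalSpace α]
    (hF : TendstoUniformlyOn F f l Θ) (hFC : ∀ i, ContinuousOn (F i) C) (hC : IsCompact C)
    (hCΘ : C ⊆ Θ) (hθs : θs ∈ C) (hc : f θs < c) (hcC : ∀ θ ∈ Θ \ C, c ≤ f θ) :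
    ∀ᶠ i in l, ∃ θ ∈ C, IsMinOn (F i) Θ θ := by
  filter_upwards [hF.eventually_mem_of_apply_le (hCΘ hθs) hc hcC] with i hi
  obtain ⟨θ, hθC, hmin⟩ := hC.exists_isMinOn ⟨θs, hθs⟩ (hFC i)
  refine ⟨θ, hθC, fun t ht => ?_⟩
  by_cases htC : t ∈ C
  · exact hmin htC
  · exact (hmin hθs).trans (le_of_not_ge fun h => htC (hi t ht h))

theorem TendstoUniformlyOn.tendsto_apply_of_isMinOn (hF : TendstoUniformlyOn F f l Θ)
    (hθ₀ : θ₀ ∈ Θ) (hmin : IsMinOn f Θ θ₀) {θn : ι → α}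
    (hθn : ∀ᶠ i in l, θn i ∈ Θ ∧ IsMinOn (F i) Θ (θn i)) :
    Tendsto (fun i => f (θn i)) l (𝓝 (f θ₀)) := by
  rw [Metric.tendsto_nhds]
  intro ε hε
  filter_upwards [Metric.tendstoUniformlyOn_iff.1 hF _ (half_pos hε), hθn]
    with i hi ⟨hθi, hmini⟩
  have hθi' := abs_lt.1 (hi _ hθi)
  have hθ₀' := abs_lt.1 (hi _ hθ₀)
  have hFi : F i (θn i) ≤ F i θ₀ := hmini hθ₀
  have hfi : f θ₀ ≤ f (θn i) := hmin hθi
  rw [Real.dist_eq, abs_lt]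
  constructor <;> linarith

theorem IsCompact.tendsto_of_tendsto_apply [TopologicalSpace α] (hC : IsCompact C)
    (hf : ContinuousOn f C) (hlt : ∀ θ ∈ C, θ ≠ θ₀ → f θ₀ < f θ) {θn : ι → α}
    (hθC : ∀ᶠ i in l, θn i ∈ C) (hfθ : Tendsto (fun i => f (θn i)) l (𝓝 (f θ₀))) :
    Tendsto θn l (𝓝 θ₀) := by
  rw [tendsto_nhds]
  intro U hU hθ₀U
  obtain ⟨m, hm, hmK⟩ := (hC.diff hU).exists_forall_le' (hf.mono Set.sdiff_subset)
    fun θ hθ => hlt θ hθ.1 fun h => hθ.2 (h ▸ hθ₀U)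
  filter_upwards [hθC, hfθ.eventually (gt_mem_nhds hm)] with i hiC him
  by_contra hiU
  exact (hmK _ ⟨hiC, hiU⟩).not_gt him

theorem TendstoUniformlyOn.tendsto_of_isMinOn [TopologicalSpace α]
    (hF : TendstoUniformlyOn F f l Θ) (hC : IsCompact C) (hCΘ : C ⊆ Θ) (hf : ContinuousOn f C)
    (hθs : θs ∈ C) (hc : f θs < c) (hcC : ∀ θ ∈ Θ \ C, c ≤ f θ)
    (hθ₀ : θ₀ ∈ Θ) (hmin : IsMinOn f Θ θ₀) (huniq : ∀ θ ∈ Θ, IsMinOn f Θ θ → θ = θ₀)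
    {θn : ι → α} (hθn : ∀ᶠ i in l, θn i ∈ Θ ∧ IsMinOn (F i) Θ (θn i)) :
    Tendsto θn l (𝓝 θ₀) := by
  have hlt : ∀ θ ∈ C, θ ≠ θ₀ → f θ₀ < f θ := fun θ hθ hne =>
    (hmin (hCΘ hθ)).lt_of_ne fun heq =>
      hne (huniq θ (hCΘ hθ) fun t ht => heq ▸ hmin ht)
  refine hC.tendsto_of_tendsto_apply hf hlt ?_ (hF.tendsto_apply_of_isMinOn hθ₀ hmin hθn)
  filter_upwards [hF.eventually_mem_of_apply_le (hCΘ hθs) hc hcC, hθn] with i hi ⟨hθi, hmini⟩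
  exact hi _ hθi (hmini (hCΘ hθs))

end ArgminStability

theorem stmt_4_general
    (Θ : Set ℝ) (p : ℝ → ℕ → ℝ) (q : ℕ → ℝ) (C : Set ℝ) (θs θ₀ : ℝ)
    (qn : ℕ → ℕ → ℝ)
    (hp : ∀ θ ∈ Θ, IsDistrib (p θ))
    (hq : IsDistrib q) (hqn : ∀ n, IsDistrib (qn n))
    (hC : IsCompact C) (hCsub : C ⊆ Θ) (hθs : θs ∈ C)
    (hinf : ∃ c, HDdist p q θs < c ∧ ∀ θ ∈ Θ \ C, c ≤ HDdist p q θ)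
    (hθ₀ : θ₀ ∈ Θ) (hθ₀min : ∀ θ ∈ Θ, HDdist p q θ₀ ≤ HDdist p q θ)
    (hθ₀uniq : ∀ θ₁ ∈ Θ, (∀ θ ∈ Θ, HDdist p q θ₁ ≤ HDdist p q θ) → θ₁ = θ₀)
    (hpcont : ∀ k, ContinuousOn (fun θ => p θ k) C)
    (hl2 : Tendsto (fun n => ∑' k, (Real.sqrt (qn n k) - Real.sqrt (q k))^2) atTop (𝓝 0)) :
    (∀ᶠ n in atTop, ∃ θ ∈ Θ, ∀ t ∈ Θ, HDdist p (qn n) θ ≤ HDdist p (qn n) t) ∧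
    ∀ θn : ℕ → ℝ,
      (∀ᶠ n in atTop, θn n ∈ Θ ∧
        ∀ t ∈ Θ, HDdist p (qn n) (θn n) ≤ HDdist p (qn n) t) →
      Tendsto θn atTop (𝓝 θ₀) := by
  obtain ⟨c, hc, hcC⟩ := hinf
  have hunif := tendstoUniformlyOn_HDdist hp hq hqn hl2
  have hcont : ∀ r, IsDistrib r → ContinuousOn (HDdist p r) C :=
    fun r => continuousOn_HDdist (fun θ hθ => hp θ (hCsub hθ)) hpcont
  refine ⟨?_, fun θn hθn => ?_⟩
  · filter_upwards [hunif.eventually_exists_isMinOn (fun n => hcont _ (hqn n)) hC hCsub hθs hc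
      hcC] with n ⟨θ, hθC, hmin⟩
    exact ⟨θ, hCsub hθC, hmin⟩
  · exact hunif.tendsto_of_isMinOn hC hCsub (hcont q hq) hθs hc hcC hθ₀ hθ₀min hθ₀uniq hθn

/-- continuity of the minimum Hellinger distance functional: if
`Σ_k (q_{n,k}^{1/2} - q_k^{1/2})² → 0`, then the minimizers of `HD(q_n,·)` eventually
exist and converge to the unique minimizer `θ₀` of `HD(q,·)`. -/
theorem stmt_4
    (Θ : Set ℝ) (p : ℝ → ℕ → ℝ) (q : ℕ → ℝ) (C : Set ℝ) (θs θ₀ : ℝ)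
    (qn : ℕ → ℕ → ℝ)
    (hp : ∀ θ ∈ Θ, IsDistrib (p θ)) (hppos : ∀ θ ∈ Θ, ∀ k, 0 < p θ k)
    (hq : IsDistrib q) (hqn : ∀ n, IsDistrib (qn n))
    (hC : IsCompact C) (hCsub : C ⊆ Θ) (hθs : θs ∈ C)
    (hinf : ∃ c, HDdist p q θs < c ∧ ∀ θ ∈ Θ \ C, c ≤ HDdist p q θ)
    (hθ₀ : θ₀ ∈ Θ) (hθ₀min : ∀ θ ∈ Θ, HDdist p q θ₀ ≤ HDdist p q θ)
    (hθ₀uniq : ∀ θ₁ ∈ Θ, (∀ θ ∈ Θ, HDdist p q θ₁ ≤ HDdist p q θ) → θ₁ = θ₀)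
    (hpcont : ∀ k, ContinuousOn (fun θ => p θ k) C)
    (hl2 : Tendsto (fun n => ∑' k, (Real.sqrt (qn n k) - Real.sqrt (q k))^2) atTop (𝓝 0)) :
    (∀ᶠ n in atTop, ∃ θ ∈ Θ, ∀ t ∈ Θ, HDdist p (qn n) θ ≤ HDdist p (qn n) t) ∧
    ∀ θn : ℕ → ℝ,
      (∀ᶠ n in atTop, θn n ∈ Θ ∧
        ∀ t ∈ Θ, HDdist p (qn n) (θn n) ≤ HDdist p (qn n) t) →
      Tendsto θn atTop (𝓝 θ₀) :=
  stmt_4_general Θ p q C θs θ₀ qn hp hq hqn hC hCsub hθs hinf hθ₀ hθ₀min hθ₀uniq hpcont hl2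
end

section
/- Let θ* ∈ Θ and let (q_n) ⊆ Γ be a sequence of contaminating distributions satisfying: (a) Σ_{k=0}^∞ min{p_k(θ*), q_{n,k}} → 0 as n → ∞; (b) for every c > 0, sup_{θ ∈ Θ, |θ| ≤ c} Σ_{k=0}^∞ min{p_k(θ), q_{n,k}} → 0 as n → ∞; (c) for every sequence (θ_n) ⊆ Θ with |θ_n| → ∞, Σ_{k=0}^∞ min{p_k(θ*), p_k(θ_n)} → 0; and (d) G(−1) is finite and lim_{t→∞} G(t)/t exists and is finite. Then for every α ∈ (0,1/2), if for each n, θ_n is a global minimizer over Θ of θ ↦ ρ((1−α)p(θ*) + α q_n, θ), the sequence (|θ_n|) does not tend to infinity. (That is, the asymptotic breakdown point of the minimum disparity estimator at the model p(θ*) is at least 1/2.) -/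
open Filter Topology

/-!
Write `h = (1 - α) p(θ*) + α q_n`. Since `G (c x) ≤ c G x` for `c ∈ [0, 1]`, `G` lies below its
chord on `[-α, 0]` and below `L t` on `t ≥ 0`, which gives
`ρ(h, θ*) ≤ G(-α) + α L + O(Σ min(p(θ*), q_n))`. Conversely, bounding `G` below by its supporting
line at `-α` where `p_k(θ_n) ≥ p_k(θ*)`, and by a supporting line of slope `d₁` close to `L`
elsewhere, gives `ρ(h, θ_n) ≥ G(-α) + (1 - α) d₁ - (1 - 2α) G'₊(-α) - O(Σ min(p(θ*), p(θ_n)))`.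
If `|θ_n| → ∞` both error terms vanish, so minimality of `θ_n` forces
`(1 - α) d₁ - (1 - 2α) G'₊(-α) ≤ α L`. This fails for `d₁` near `L`, because `α < 1/2` and strict
convexity gives `G'₊(-α) < L`.
-/

open Set

namespace ConvexOn

variable {S : Set ℝ} {G : ℝ → ℝ}

lemma map_mul_le_mul_of_map_zero (hG : ConvexOn ℝ S G) (h0 : 0 ∈ S) (hG0 : G 0 = 0) {x c : ℝ}
    (hx : x ∈ S) (hc0 : 0 ≤ c) (hc1 : c ≤ 1) : G (c * x) ≤ c * G x := by
  simpa [hG0] using hG.2 hx h0 hc0 (sub_nonneg.2 hc1) (add_sub_cancel c 1)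

lemma add_rightDeriv_mul_sub_le (hG : ConvexOn ℝ S G) {x y : ℝ} (hx : x ∈ interior S)
    (hy : y ∈ S) : G x + derivWithin G (Ioi x) x * (y - x) ≤ G y := by
  rcases lt_trichotomy x y with hxy | rfl | hyx
  · have h := hG.rightDeriv_le_slope_of_mem_interior hx hy hxy
    rw [slope_def_field, le_div_iff₀ (sub_pos.2 hxy)] at h
    linarith
  · simp
  · have h := (hG.slope_le_leftDeriv_of_mem_interior hy hx hyx).trans
      (hG.leftDeriv_le_rightDeriv_of_mem_interior hx)
    rw [slope_def_field, div_le_iff₀ (sub_pos.2 hyx)] at h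
    linarith

end ConvexOn

section Asymptotics

variable {G : ℝ → ℝ} {L : ℝ}

lemma ConvexOn.le_mul_of_tendsto_div (hG : ConvexOn ℝ (Ici (-1)) G) (hG0 : G 0 = 0)
    (hL : Tendsto (fun t => G t / t) atTop (𝓝 L)) {t : ℝ} (ht : 0 ≤ t) : G t ≤ L * t := by
  rcases ht.eq_or_lt with rfl | ht
  · simp [hG0]
  suffices G t / t ≤ L by rwa [div_le_iff₀ ht] at this
  refine ge_of_tendsto hL ?_
  filter_upwards [eventually_ge_atTop t] with s hts
  have hs : 0 < s := ht.trans_le hts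
  have h := hG.map_mul_le_mul_of_map_zero (by norm_num) hG0 (x := s) (c := t / s)
    (by simp only [mem_Ici]; linarith) (by positivity) ((div_le_one hs).2 hts)
  rw [div_mul_cancel₀ _ hs.ne', div_mul_eq_mul_div, le_div_iff₀ hs] at h
  rw [div_le_div_iff₀ ht hs]
  linarith

lemma ConvexOn.exists_affine_le_of_tendsto_div (hG : ConvexOn ℝ (Ici (-1)) G) (hG0 : G 0 = 0)
    (hL : Tendsto (fun t => G t / t) atTop (𝓝 L)) {ε : ℝ} (hε : 0 < ε) :
    ∃ c d, L - ε < d ∧ ∀ t, -1 ≤ t → c + d * t ≤ G t := by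
  obtain ⟨x, hxL, hx⟩ := ((hL.eventually (lt_mem_nhds (sub_lt_self L hε))).and
    (eventually_gt_atTop 0)).exists
  have hxi : x ∈ interior (Ici (-1 : ℝ)) := by
    rw [interior_Ici]; exact lt_trans (by norm_num) hx
  set d := derivWithin G (Ioi x) x
  refine ⟨G x - d * x, d, ?_, fun t ht => ?_⟩
  · -- evaluating the supporting line at `0` gives `G x / x ≤ d`
    have h0 := hG.add_rightDeriv_mul_sub_le hxi (y := 0) (by norm_num)
    rw [hG0] at h0
    rw [lt_div_iff₀ hx] at hxL
    nlinarith
  · have := hG.add_rightDeriv_mul_sub_le hxi ht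
    linarith

lemma StrictConvexOn.rightDeriv_lt_of_tendsto_div (hG : StrictConvexOn ℝ (Ici (-1)) G)
    (hG0 : G 0 = 0) (hL : Tendsto (fun t => G t / t) atTop (𝓝 L)) {x : ℝ} (hx1 : -1 < x)
    (hx0 : x < 0) : derivWithin G (Ioi x) x < L := by
  have hxi : x ∈ interior (Ici (-1 : ℝ)) := by rwa [interior_Ici]
  calc derivWithin G (Ioi x) x ≤ (G 0 - G x) / (0 - x) := by
        simpa [slope_def_field] using
          hG.convexOn.rightDeriv_le_slope_of_mem_interior hxi (by norm_num) hx0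
    _ < (G 1 - G 0) / (1 - 0) :=
        hG.slope_strict_mono_adjacent (by simpa using hx1.le) (by norm_num) hx0 one_pos
    _ ≤ L := by simpa [hG0] using hG.convexOn.le_mul_of_tendsto_div hG0 hL zero_le_one

end Asymptotics

lemma IsDistrib.mix {p q : ℕ → ℝ} (hp : IsDistrib p) (hq : IsDistrib q) {α : ℝ} (hα0 : 0 ≤ α)
    (hα1 : α ≤ 1) : IsDistrib (fun k => (1 - α) * p k + α * q k) :=
  ⟨fun k => by have := hp.1 k; have := hq.1 k; positivity,
    by simpa using (hp.2.mul_left (1 - α)).add (hq.2.mul_left α)⟩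

lemma IsDistrib.summable_min {p q : ℕ → ℝ} (hp : IsDistrib p) (hq : ∀ k, 0 ≤ q k) :
    Summable (fun k => min (p k) (q k)) :=
  hp.2.summable.of_nonneg_of_le (fun k => le_min (hp.1 k) (hq k)) (fun _ => min_le_left _ _)

lemma summable_of_le_of_le {β : Type*} {f g h : β → ℝ} (hg : Summable g) (hh : Summable h)
    (hgf : ∀ k, g k ≤ f k) (hfh : ∀ k, f k ≤ h k) : Summable f := by
  have : Summable (fun k => f k - g k) :=
    (hh.sub hg).of_nonneg_of_le (fun k => sub_nonneg.2 (hgf k)) (fun k => by linarith [hfh k])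
  simpa using this.add hg

section Perspective

variable {G : ℝ → ℝ} {L α : ℝ}

lemma add_mul_div_sub_one_mul (c d h m : ℝ) (hm : m ≠ 0) :
    (c + d * (h / m - 1)) * m = (c - d) * m + d * h := by
  field_simp
  ring

lemma summable_perspective (hG : ConvexOn ℝ (Ici (-1)) G) (hG0 : G 0 = 0)
    (hL : ∀ t, 0 ≤ t → G t ≤ L * t) {h m : ℕ → ℝ} (hh : IsDistrib h) (hm : IsDistrib m)
    (hmpos : ∀ k, 0 < m k) : Summable (fun k => G (h k / m k - 1) * m k) := by
  set d := derivWithin G (Ioi 0) 0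
  have h0 : (0 : ℝ) ∈ interior (Ici (-1)) := by rw [interior_Ici]; norm_num
  have hup : ∀ t, -1 ≤ t → G t ≤ (|G (-1)| + |L|) + |L| * t := by
    intro t ht
    rcases le_total t 0 with ht0 | ht0
    · have := hG.map_mul_le_mul_of_map_zero (by norm_num) hG0 (x := -1) (c := -t) (by simp)
        (by linarith) (by linarith)
      rw [neg_mul_neg, mul_one] at this
      nlinarith [mul_le_mul_of_nonneg_left (le_abs_self (G (-1))) (neg_nonneg.2 ht0),
        mul_nonneg (abs_nonneg (G (-1))) (by linarith : 0 ≤ t + 1),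
        mul_nonneg (abs_nonneg L) (by linarith : 0 ≤ t + 1)]
    · linarith [hL t ht0, mul_le_mul_of_nonneg_right (le_abs_self L) ht0, abs_nonneg (G (-1)),
        abs_nonneg L]
  refine summable_of_le_of_le (g := fun k => (0 - d) * m k + d * h k)
    (h := fun k => (|G (-1)| + |L| - |L|) * m k + |L| * h k)
    ((hm.2.summable.mul_left _).add (hh.2.summable.mul_left _))
    ((hm.2.summable.mul_left _).add (hh.2.summable.mul_left _)) (fun k => ?_) (fun k => ?_)
  all_goals
    have hk := hmpos k
    have ht : -1 ≤ h k / m k - 1 := by have := div_nonneg (hh.1 k) hk.le; linarith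
  · rw [← add_mul_div_sub_one_mul _ _ _ _ hk.ne', ← hG0]
    have := hG.add_rightDeriv_mul_sub_le h0 ht
    exact mul_le_mul_of_nonneg_right (by simpa using this) hk.le
  · rw [← add_mul_div_sub_one_mul _ _ _ _ hk.ne']
    exact mul_le_mul_of_nonneg_right (hup _ ht) hk.le

lemma perspective_mix_le (hG : ConvexOn ℝ (Ici (-1)) G) (hG0 : G 0 = 0)
    (hL : ∀ t, 0 ≤ t → G t ≤ L * t) (hα0 : 0 ≤ α) (hα1 : α ≤ 1) {p q : ℝ} (hp : 0 < p)
    (hq : 0 ≤ q) :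
    G (((1 - α) * p + α * q) / p - 1) * p
      ≤ G (-α) * p + α * L * q + (|G (-α)| + α * |L|) * min p q := by
  set t := ((1 - α) * p + α * q) / p - 1 with ht
  rcases le_total q p with hqp | hpq
  · have h : G t ≤ (1 - q / p) * G (-α) := by
      have harg : t = (1 - q / p) * -α := by rw [ht]; field_simp; ring
      rw [harg]
      exact hG.map_mul_le_mul_of_map_zero (by norm_num) hG0 (by simp only [mem_Ici]; linarith)
        (by linarith [(div_le_one hp).2 hqp]) (by linarith [div_nonneg hq hp.le])
    have h' : G t * p ≤ (p - q) * G (-α) := by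
      calc G t * p ≤ (1 - q / p) * G (-α) * p := mul_le_mul_of_nonneg_right h hp.le
        _ = (p - q) * G (-α) := by field_simp
    rw [min_eq_right hqp]
    nlinarith [neg_abs_le (G (-α)), mul_nonneg (mul_nonneg hα0 (abs_nonneg L)) hq,
      mul_le_mul_of_nonneg_left (neg_abs_le L) (mul_nonneg hα0 hq)]
  · have harg : t = α * (q - p) / p := by rw [ht]; field_simp; ring
    have h' : G t * p ≤ L * (α * (q - p)) := by
      calc G t * p ≤ L * t * p :=
            mul_le_mul_of_nonneg_right (hL _ (by rw [harg]; have := sub_nonneg.2 hpq; positivity))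
              hp.le
        _ = L * (α * (q - p)) := by rw [harg]; field_simp
    rw [min_eq_left hpq]
    nlinarith [neg_abs_le (G (-α)),
      mul_le_mul_of_nonneg_left (neg_abs_le L) (mul_nonneg hα0 hp.le)]

lemma le_perspective_mix {c₁ d₁ c₂ d₂ : ℝ} (h₁ : ∀ t, -1 ≤ t → c₁ + d₁ * t ≤ G t)
    (h₂ : ∀ t, -1 ≤ t → c₂ + d₂ * t ≤ G t) (hd : d₂ ≤ d₁) (hα0 : 0 ≤ α) (hα1 : α ≤ 1)
    {p q m : ℝ} (hp : 0 ≤ p) (hq : 0 ≤ q) (hm : 0 < m) :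
    (c₂ - d₂) * m + (1 - α) * d₁ * p + α * d₂ * q
        - (|c₁ - d₁ - c₂ + d₂| + (d₁ - d₂)) * min p m
      ≤ G (((1 - α) * p + α * q) / m - 1) * m := by
  have ht : -1 ≤ ((1 - α) * p + α * q) / m - 1 := by
    have : 0 ≤ ((1 - α) * p + α * q) / m := by
      have := mul_nonneg (sub_nonneg.2 hα1) hp; have := mul_nonneg hα0 hq; positivity
    linarith
  have tangent (c d : ℝ) (h : ∀ t, -1 ≤ t → c + d * t ≤ G t) :
      (c - d) * m + d * ((1 - α) * p + α * q) ≤ G (((1 - α) * p + α * q) / m - 1) * m := by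
    rw [← add_mul_div_sub_one_mul _ _ _ _ hm.ne']
    exact mul_le_mul_of_nonneg_right (h _ ht) hm.le
  rcases le_total p m with hpm | hmp
  · rw [min_eq_left hpm]
    have := tangent c₂ d₂ h₂
    nlinarith [mul_nonneg (sub_nonneg.2 hd) (mul_nonneg hα0 hp),
      mul_nonneg (abs_nonneg (c₁ - d₁ - c₂ + d₂)) hp]
  · rw [min_eq_right hmp]
    have := tangent c₁ d₁ h₁
    nlinarith [mul_nonneg (sub_nonneg.2 hd) (mul_nonneg hα0 hq),
      mul_nonneg (sub_nonneg.2 hd) hm.le,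
      mul_le_mul_of_nonneg_right (neg_abs_le (c₁ - d₁ - c₂ + d₂)) hm.le]

end Perspective

section Disparity

variable {G : ℝ → ℝ} {L α : ℝ} {p : ℝ → ℕ → ℝ} {q : ℕ → ℝ}

lemma disparity_mix_le (hG : ConvexOn ℝ (Ici (-1)) G) (hG0 : G 0 = 0)
    (hL : ∀ t, 0 ≤ t → G t ≤ L * t) (hα0 : 0 ≤ α) (hα1 : α ≤ 1) {θ : ℝ}
    (hp : IsDistrib (p θ)) (hppos : ∀ k, 0 < p θ k) (hq : IsDistrib q) :
    disparity G p (fun k => (1 - α) * p θ k + α * q k) θ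
      ≤ G (-α) + α * L + (|G (-α)| + α * |L|) * ∑' k, min (p θ k) (q k) := by
  have hbound := ((hp.2.mul_left (G (-α))).add (hq.2.mul_left (α * L))).add
    ((hp.summable_min hq.1).hasSum.mul_left (|G (-α)| + α * |L|))
  calc disparity G p (fun k => (1 - α) * p θ k + α * q k) θ
      ≤ ∑' k, (G (-α) * p θ k + α * L * q k + (|G (-α)| + α * |L|) * min (p θ k) (q k)) :=
        (summable_perspective hG hG0 hL (hp.mix hq hα0 hα1) hp hppos).tsum_le_tsum
          (fun k => perspective_mix_le hG hG0 hL hα0 hα1 (hppos k) (hq.1 k)) hbound.summable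
    _ = _ := by rw [hbound.tsum_eq]; ring

lemma le_disparity_mix (hG : ConvexOn ℝ (Ici (-1)) G) (hG0 : G 0 = 0)
    (hL : ∀ t, 0 ≤ t → G t ≤ L * t) {c₁ d₁ c₂ d₂ : ℝ} (h₁ : ∀ t, -1 ≤ t → c₁ + d₁ * t ≤ G t)
    (h₂ : ∀ t, -1 ≤ t → c₂ + d₂ * t ≤ G t) (hd : d₂ ≤ d₁) (hα0 : 0 ≤ α) (hα1 : α ≤ 1)
    {θ₀ θ : ℝ} (hp₀ : IsDistrib (p θ₀)) (hp : IsDistrib (p θ)) (hppos : ∀ k, 0 < p θ k)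
    (hq : IsDistrib q) :
    c₂ + (1 - α) * (d₁ - d₂) - (|c₁ - d₁ - c₂ + d₂| + (d₁ - d₂)) * ∑' k, min (p θ₀ k) (p θ k)
      ≤ disparity G p (fun k => (1 - α) * p θ₀ k + α * q k) θ := by
  have hbound := (((hp.2.mul_left (c₂ - d₂)).add (hp₀.2.mul_left ((1 - α) * d₁))).add
    (hq.2.mul_left (α * d₂))).sub
    ((hp₀.summable_min hp.1).hasSum.mul_left (|c₁ - d₁ - c₂ + d₂| + (d₁ - d₂)))
  calc _ = ∑' k, ((c₂ - d₂) * p θ k + (1 - α) * d₁ * p θ₀ k + α * d₂ * q k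
        - (|c₁ - d₁ - c₂ + d₂| + (d₁ - d₂)) * min (p θ₀ k) (p θ k)) := by
        rw [hbound.tsum_eq]; ring
    _ ≤ disparity G p (fun k => (1 - α) * p θ₀ k + α * q k) θ :=
        hbound.summable.tsum_le_tsum
          (fun k => le_perspective_mix h₁ h₂ hd hα0 hα1 (hp₀.1 k) (hq.1 k) (hppos k))
          (summable_perspective hG hG0 hL (hp₀.mix hq hα0 hα1) hp hppos)

end Disparity

theorem stmt_14_general
    (Θ : Set ℝ) (p : ℝ → ℕ → ℝ) (G : ℝ → ℝ) (θstar : ℝ) (qn : ℕ → ℕ → ℝ)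
    (hp : ∀ θ ∈ Θ, IsDistrib (p θ)) (hppos : ∀ θ ∈ Θ, ∀ k, 0 < p θ k)
    (hGconv : StrictConvexOn ℝ (Set.Ici (-1)) G) (hG0 : G 0 = 0)
    (hθstar : θstar ∈ Θ) (hqn : ∀ n, IsDistrib (qn n))
    -- (a)
    (ha : Tendsto (fun n => ∑' k, min (p θstar k) (qn n k)) atTop (𝓝 0))
    -- (c)
    (hc : ∀ θseq : ℕ → ℝ, (∀ n, θseq n ∈ Θ) →
      Tendsto (fun n => |θseq n|) atTop atTop →
      Tendsto (fun n => ∑' k, min (p θstar k) (p (θseq n) k)) atTop (𝓝 0))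
    -- (d): `G(−1)` is finite (automatic for real-valued `G`) and `lim_{t→∞} G(t)/t`
    -- exists and is finite
    (hd : ∃ l : ℝ, Tendsto (fun t => G t / t) atTop (𝓝 l)) :
    ∀ α : ℝ, 0 < α → α < 1 / 2 →
      ∀ θn : ℕ → ℝ,
        (∀ n, θn n ∈ Θ ∧ ∀ t ∈ Θ,
          disparity G p (fun k => (1 - α) * p θstar k + α * qn n k) (θn n) ≤
          disparity G p (fun k => (1 - α) * p θstar k + α * qn n k) t) →
        ¬ Tendsto (fun n => |θn n|) atTop atTop := by
  intro α hα0 hα2 θn hmin hdiv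
  obtain ⟨L, hL⟩ := hd
  have hG := hGconv.convexOn
  have hGL : ∀ t, 0 ≤ t → G t ≤ L * t := fun t => hG.le_mul_of_tendsto_div hG0 hL
  set d₂ := derivWithin G (Ioi (-α)) (-α)
  have hd₂L : d₂ < L := hGconv.rightDeriv_lt_of_tendsto_div hG0 hL (by linarith) (by linarith)
  have h₂ (t : ℝ) (ht : -1 ≤ t) : G (-α) + d₂ * α + d₂ * t ≤ G t := by
    have := hG.add_rightDeriv_mul_sub_le (x := -α) (by rw [interior_Ici, mem_Ioi]; linarith) ht
    linarith
  obtain ⟨c₁, d₁, hd₁, h₁⟩ := hG.exists_affine_le_of_tendsto_div hG0 hL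
    (ε := (1 - 2 * α) * (L - d₂) / 2) (by have := sub_pos.2 hd₂L; nlinarith)
  have hd : d₂ ≤ d₁ := by nlinarith
  set A := |G (-α)| + α * |L|
  set B := |c₁ - d₁ - (G (-α) + d₂ * α) + d₂| + (d₁ - d₂)
  have hgap (n : ℕ) : (1 - α) * d₁ - (1 - 2 * α) * d₂ - α * L
      ≤ A * ∑' k, min (p θstar k) (qn n k) + B * ∑' k, min (p θstar k) (p (θn n) k) := by
    have hlow := le_disparity_mix hG hG0 hGL h₁ h₂ hd hα0.le (by linarith) (hp θstar hθstar)
      (hp _ (hmin n).1) (hppos _ (hmin n).1) (hqn n)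
    have hup := disparity_mix_le hG hG0 hGL hα0.le (by linarith) (hp θstar hθstar)
      (hppos _ hθstar) (hqn n)
    linarith [(hmin n).2 θstar hθstar]
  have hlim := (ha.const_mul A).add ((hc θn (fun n => (hmin n).1) hdiv).const_mul B)
  rw [mul_zero, mul_zero, add_zero] at hlim
  have := ge_of_tendsto' hlim hgap
  nlinarith

/-- the asymptotic breakdown point of the MDE at the model `p(θ*)` is at
least `1/2`: under (a)–(d), for any contamination level `α ∈ (0,1/2)` and any choice of
global minimizers `θ_n` of `ρ((1−α)p(θ*) + α q_n, ·)`, the sequence `(|θ_n|)` does not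
tend to infinity. -/
theorem stmt_14
    (Θ : Set ℝ) (p : ℝ → ℕ → ℝ) (G : ℝ → ℝ) (θstar : ℝ) (qn : ℕ → ℕ → ℝ)
    (hp : ∀ θ ∈ Θ, IsDistrib (p θ)) (hppos : ∀ θ ∈ Θ, ∀ k, 0 < p θ k)
    (hG3 : ContDiffOn ℝ 3 G (Set.Ici (-1)))
    (hGconv : StrictConvexOn ℝ (Set.Ici (-1)) G) (hG0 : G 0 = 0)
    (hθstar : θstar ∈ Θ) (hqn : ∀ n, IsDistrib (qn n))
    -- (a)
    (ha : Tendsto (fun n => ∑' k, min (p θstar k) (qn n k)) atTop (𝓝 0))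
    -- (b) uniformly over `{θ ∈ Θ : |θ| ≤ c}` for every `c`
    (hb : ∀ c > (0:ℝ), ∀ ε > (0:ℝ), ∀ᶠ n in atTop,
      ∀ θ ∈ Θ, |θ| ≤ c → ∑' k, min (p θ k) (qn n k) < ε)
    -- (c)
    (hc : ∀ θseq : ℕ → ℝ, (∀ n, θseq n ∈ Θ) →
      Tendsto (fun n => |θseq n|) atTop atTop →
      Tendsto (fun n => ∑' k, min (p θstar k) (p (θseq n) k)) atTop (𝓝 0))
    -- (d): `G(−1)` is finite (automatic for real-valued `G`) and `lim_{t→∞} G(t)/t`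
    -- exists and is finite
    (hd : ∃ l : ℝ, Tendsto (fun t => G t / t) atTop (𝓝 l)) :
    ∀ α : ℝ, 0 < α → α < 1 / 2 →
      ∀ θn : ℕ → ℝ,
        (∀ n, θn n ∈ Θ ∧ ∀ t ∈ Θ,
          disparity G p (fun k => (1 - α) * p θstar k + α * qn n k) (θn n) ≤
          disparity G p (fun k => (1 - α) * p θstar k + α * qn n k) t) →
        ¬ Tendsto (fun n => |θn n|) atTop atTop :=
  stmt_14_general Θ p G θstar qn hp hppos hGconv hG0 hθstar hqn ha hc hd
end

section
/- Let q ∈ Γ, suppose θ ↦ p_k(θ) is continuous on Θ for each k, that HD(q,·) has a unique global minimizer T over Θ lying in the interior of Θ, and that there is a compact C ⊆ Θ with inf_{θ ∈ Θ∖C} HD(q,θ) > HD(q,θ*) for some θ* ∈ C. Define the affinity ϱ(q,p(θ)) = Σ_{k=0}^∞ (q_k p_k(θ))^{1/2}, set ϱ̂ = sup_{θ ∈ Θ} ϱ(q,p(θ)) and ϱ* = lim_{M→∞} sup_{θ ∈ Θ, |θ| > M} ϱ(q,p(θ)). Fix α ∈ (0,1), let (q_n) ⊆ Γ, put h_n =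 (1−α)q + α q_n, and assume that for each n the map θ ↦ HD(h_n,θ) has a unique global minimizer T_n over Θ. If α < (ϱ̂ − ϱ*)² / (1 + (ϱ̂ − ϱ*)²), then it is not the case that |T_n − T| → ∞; i.e., no such contaminating sequence causes breakdown of the minimum Hellinger distance functional at q. -/
open Filter Topology

/-- The affinity `ϱ(q,p(θ)) = Σ_k (q_k p_k(θ))^{1/2}`. -/
noncomputable def affinity (p : ℝ → ℕ → ℝ) (q : ℕ → ℝ) (θ : ℝ) : ℝ :=
  ∑' k, Real.sqrt (q k * p θ k)

lemma sqrt_mul_le_half (a b : ℝ) (ha : 0 ≤ a) (hb : 0 ≤ b) :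
    Real.sqrt (a * b) ≤ (a + b) / 2 := by
  rw [Real.sqrt_mul ha]
  nlinarith [sq_nonneg (Real.sqrt a - Real.sqrt b), Real.sq_sqrt ha, Real.sq_sqrt hb,
    Real.sqrt_nonneg a, Real.sqrt_nonneg b]

lemma sqrt_add_le' (a b : ℝ) (ha : 0 ≤ a) (hb : 0 ≤ b) :
    Real.sqrt (a + b) ≤ Real.sqrt a + Real.sqrt b := by
  have h : a + b ≤ (Real.sqrt a + Real.sqrt b)^2 := by
    nlinarith [Real.sq_sqrt ha, Real.sq_sqrt hb, Real.sqrt_nonneg a, Real.sqrt_nonneg b]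
  calc Real.sqrt (a + b) ≤ Real.sqrt ((Real.sqrt a + Real.sqrt b)^2) := Real.sqrt_le_sqrt h
    _ = Real.sqrt a + Real.sqrt b := Real.sqrt_sq (by positivity)

lemma summable_aff (r s : ℕ → ℝ) (hr : IsDistrib r) (hs : IsDistrib s) :
    Summable (fun k => Real.sqrt (r k * s k)) := by
  refine Summable.of_nonneg_of_le (fun k => Real.sqrt_nonneg _)
    (fun k => sqrt_mul_le_half _ _ (hr.1 k) (hs.1 k)) ?_
  exact (hr.2.summable.add hs.2.summable).div_const 2

lemma aff_le_one (r s : ℕ → ℝ) (hr : IsDistrib r) (hs : IsDistrib s) :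
    ∑' k, Real.sqrt (r k * s k) ≤ 1 := by
  have h2 : HasSum (fun k => (r k + s k) / 2) ((1 + 1) / 2) := (hr.2.add hs.2).div_const 2
  calc ∑' k, Real.sqrt (r k * s k) ≤ ∑' k, (r k + s k) / 2 :=
        Summable.tsum_le_tsum (fun k => sqrt_mul_le_half _ _ (hr.1 k) (hs.1 k))
          (summable_aff r s hr hs) h2.summable
    _ = (1 + 1) / 2 := h2.tsum_eq
    _ = 1 := by norm_num

lemma HD_eq (r s : ℕ → ℝ) (hr : IsDistrib r) (hs : IsDistrib s) :
    ∑' k, (Real.sqrt (r k) - Real.sqrt (s k))^2 = 2 - 2 * ∑' k, Real.sqrt (r k * s k) := by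
  have h1 : ∀ k, (Real.sqrt (r k) - Real.sqrt (s k))^2
      = (r k + s k) - 2 * Real.sqrt (r k * s k) := by
    intro k
    rw [sub_sq, Real.sq_sqrt (hr.1 k), Real.sq_sqrt (hs.1 k), Real.sqrt_mul (hr.1 k)]
    ring
  have hsum : HasSum (fun k => (r k + s k) - 2 * Real.sqrt (r k * s k))
      ((1 + 1) - 2 * ∑' k, Real.sqrt (r k * s k)) :=
    (hr.2.add hs.2).sub ((summable_aff r s hr hs).hasSum.mul_left 2)
  rw [tsum_congr h1, hsum.tsum_eq]
  ring

/-- no breakdown of the minimum Hellinger distance functional below the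
level `(ϱ̂ − ϱ*)²/(1 + (ϱ̂ − ϱ*)²)`: if `α` is below this bound, then for contaminated
sequences `h_n = (1−α)q + α q_n` with unique minimizers `T_n`, it is not the case that
`|T_n − T| → ∞`. -/
theorem stmt_15
    (Θ : Set ℝ) (p : ℝ → ℕ → ℝ) (q : ℕ → ℝ) (C : Set ℝ) (θs T : ℝ)
    (hp : ∀ θ ∈ Θ, IsDistrib (p θ)) (hppos : ∀ θ ∈ Θ, ∀ k, 0 < p θ k)
    (hq : IsDistrib q)
    (hpcont : ∀ k, ContinuousOn (fun θ => p θ k) Θ)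
    (hT : T ∈ interior Θ)
    (hTmin : ∀ θ ∈ Θ, HDdist p q T ≤ HDdist p q θ)
    (hTuniq : ∀ θ₁ ∈ Θ, (∀ θ ∈ Θ, HDdist p q θ₁ ≤ HDdist p q θ) → θ₁ = T)
    (hC : IsCompact C) (hCsub : C ⊆ Θ) (hθs : θs ∈ C)
    (hinf : ∃ c, HDdist p q θs < c ∧ ∀ θ ∈ Θ \ C, c ≤ HDdist p q θ)
    (rhohat rhostar : ℝ)
    (hrhohat : IsLUB ((fun θ => affinity p q θ) '' Θ) rhohat)
    (hrhostar : Tendsto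
      (fun M : ℝ => sSup ((fun θ => affinity p q θ) '' {θ ∈ Θ | M < |θ|}))
      atTop (𝓝 rhostar))
    (α : ℝ) (hα : α ∈ Set.Ioo (0:ℝ) 1)
    (qn : ℕ → ℕ → ℝ) (hqn : ∀ n, IsDistrib (qn n))
    (Tn : ℕ → ℝ)
    (hTn : ∀ n, Tn n ∈ Θ ∧
      (∀ θ ∈ Θ, HDdist p (fun k => (1 - α) * q k + α * qn n k) (Tn n) ≤
        HDdist p (fun k => (1 - α) * q k + α * qn n k) θ) ∧
      (∀ θ₁ ∈ Θ, (∀ θ ∈ Θ, HDdist p (fun k => (1 - α) * q k + α * qn n k) θ₁ ≤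
        HDdist p (fun k => (1 - α) * q k + α * qn n k) θ) → θ₁ = Tn n))
    (hαsmall : α < (rhohat - rhostar) ^ 2 / (1 + (rhohat - rhostar) ^ 2)) :
    ¬ Tendsto (fun n => |Tn n - T|) atTop atTop := by
  intro hcontra
  obtain ⟨hα0, hα1⟩ := hα
  have h1α : 0 < 1 - α := by linarith
  have hs : 0 < Real.sqrt (1 - α) := Real.sqrt_pos.2 h1α
  set D : ℝ := Real.sqrt α / Real.sqrt (1 - α) with hD
  -- mixtures are distributions
  have hdh : ∀ n, IsDistrib (fun k => (1 - α) * q k + α * qn n k) := by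
    intro n
    constructor
    · intro k
      have h1 := mul_nonneg h1α.le (hq.1 k)
      have h2 := mul_nonneg hα0.le ((hqn n).1 k)
      show (0:ℝ) ≤ (1 - α) * q k + α * qn n k
      linarith
    · have h2 := (hq.2.mul_left (1 - α)).add ((hqn n).2.mul_left α)
      have : (1 - α) * 1 + α * 1 = 1 := by ring
      rwa [this] at h2
  -- 0 ≤ affinities
  have haffnn : ∀ (r : ℕ → ℝ) (θ : ℝ), 0 ≤ affinity p r θ := fun r θ =>
    tsum_nonneg (fun k => Real.sqrt_nonneg _)
  -- rhohat nonneg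
  have hθsΘ : θs ∈ Θ := hCsub hθs
  have h0rhohat : 0 ≤ rhohat :=
    le_trans (haffnn q θs) (hrhohat.1 (Set.mem_image_of_mem _ hθsΘ))
  -- each sSup ≤ rhohat, hence rhostar ≤ rhohat
  have hSle : ∀ M : ℝ, sSup ((fun θ => affinity p q θ) '' {θ ∈ Θ | M < |θ|}) ≤ rhohat := by
    intro M
    refine Real.sSup_le ?_ h0rhohat
    rintro x ⟨θ, hθ, rfl⟩
    exact hrhohat.1 (Set.mem_image_of_mem _ hθ.1)
  have hstarle : rhostar ≤ rhohat := le_of_tendsto' hrhostar hSle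
  -- d > 0
  have hd0 : 0 ≤ rhohat - rhostar := by linarith
  have hd : 0 < rhohat - rhostar := by
    rcases hd0.lt_or_eq with h | h
    · exact h
    · exfalso
      rw [← h] at hαsmall
      norm_num at hαsmall
      linarith
  -- D < rhohat - rhostar
  have hDlt : D < rhohat - rhostar := by
    rw [hD, ← Real.sqrt_div hα0.le]
    rw [Real.sqrt_lt' hd]
    rw [div_lt_iff₀ h1α]
    have h2 : α * (1 + (rhohat - rhostar)^2) < (rhohat - rhostar)^2 :=
      (lt_div_iff₀ (by positivity)).1 hαsmall
    nlinarith
  -- key inequality: affinity p q (Tn n) ≥ rhohat - D for all n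
  have hkey : ∀ n, rhohat - D ≤ affinity p q (Tn n) := by
    intro n
    set h : ℕ → ℝ := fun k => (1 - α) * q k + α * qn n k with hh
    have hhd : IsDistrib h := hdh n
    obtain ⟨hTnΘ, hTnmin, _⟩ := hTn n
    -- lower bound: √(1-α)·aff(q,θ) ≤ aff(h,θ) for θ ∈ Θ
    have hlow : ∀ θ ∈ Θ, Real.sqrt (1 - α) * affinity p q θ ≤ affinity p h θ := by
      intro θ hθ
      have hpθ := hp θ hθ
      unfold affinity
      rw [← tsum_mul_left]
      refine Summable.tsum_le_tsum (fun k => ?_) ((summable_aff q (p θ) hq hpθ).mul_left _)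
        (summable_aff h (p θ) hhd hpθ)
      rw [← Real.sqrt_mul h1α.le, ← mul_assoc]
      apply Real.sqrt_le_sqrt
      have h1 := (hqn n).1 k
      have h2 := (hpθ.1 k)
      simp only [hh]
      nlinarith [mul_nonneg (mul_nonneg hα0.le h1) h2]
    -- upper bound: aff(h,θ) ≤ √(1-α)·aff(q,θ) + √α·aff(qn,θ)
    have hup : ∀ θ ∈ Θ, affinity p h θ ≤
        Real.sqrt (1 - α) * affinity p q θ + Real.sqrt α * affinity p (qn n) θ := by
      intro θ hθ
      have hpθ := hp θ hθ
      unfold affinity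
      rw [← tsum_mul_left, ← tsum_mul_left,
        ← Summable.tsum_add ((summable_aff q (p θ) hq hpθ).mul_left _)
          ((summable_aff (qn n) (p θ) (hqn n) hpθ).mul_left _)]
      refine Summable.tsum_le_tsum (fun k => ?_) (summable_aff h (p θ) hhd hpθ) ?_
      · have h1 := hq.1 k
        have h2 := (hqn n).1 k
        have h3 := (hpθ.1 k)
        have he : h k * p θ k = (1 - α) * (q k * p θ k) + α * (qn n k * p θ k) := by
          simp only [hh]; ring
        rw [he, ← Real.sqrt_mul h1α.le, ← Real.sqrt_mul hα0.le]
        exact sqrt_add_le' _ _ (by positivity) (by positivity)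
      · exact ((summable_aff q (p θ) hq hpθ).mul_left _).add
          ((summable_aff (qn n) (p θ) (hqn n) hpθ).mul_left _)
    -- minimality in affinity form
    have haffmin : ∀ θ ∈ Θ, affinity p h θ ≤ affinity p h (Tn n) := by
      intro θ hθ
      have h1 := hTnmin θ hθ
      have e1 : HDdist p h (Tn n) = 2 - 2 * affinity p h (Tn n) :=
        HD_eq h (p (Tn n)) hhd (hp _ hTnΘ)
      have e2 : HDdist p h θ = 2 - 2 * affinity p h θ := HD_eq h (p θ) hhd (hp _ hθ)
      rw [e1, e2] at h1
      linarith
    -- for every θ ∈ Θ : aff(q,θ) ≤ aff(q,Tn n) + D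
    have hub : ∀ x ∈ (fun θ => affinity p q θ) '' Θ, x ≤ affinity p q (Tn n) + D := by
      rintro x ⟨θ, hθ, rfl⟩
      have c1 := hlow θ hθ
      have c2 := haffmin θ hθ
      have c3 := hup (Tn n) hTnΘ
      have c4 : affinity p (qn n) (Tn n) ≤ 1 := aff_le_one _ _ (hqn n) (hp _ hTnΘ)
      have c5 : Real.sqrt (1 - α) * affinity p q θ ≤
          Real.sqrt (1 - α) * affinity p q (Tn n) + Real.sqrt α := by
        have : Real.sqrt α * affinity p (qn n) (Tn n) ≤ Real.sqrt α :=
          (mul_le_of_le_one_right (Real.sqrt_nonneg α) c4)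
        linarith
      have hdiv : D * Real.sqrt (1 - α) = Real.sqrt α := div_mul_cancel₀ _ hs.ne'
      nlinarith
    have := hrhohat.2 hub
    linarith
  -- choose M with sSup < rhohat - D
  have hclt : rhostar < rhohat - D := by linarith
  obtain ⟨M, hM⟩ := (hrhostar.eventually_lt_const hclt).exists
  -- choose n with |Tn n| > M
  obtain ⟨n, hn⟩ := (hcontra.eventually_gt_atTop (M + |T|)).exists
  have hTnM : M < |Tn n| := by
    have h1 : |Tn n - T| ≤ |Tn n| + |T| := by
      calc |Tn n - T| = |Tn n + (-T)| := by rw [sub_eq_add_neg]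
        _ ≤ |Tn n| + |(-T)| := abs_add_le _ _
        _ = |Tn n| + |T| := by rw [abs_neg]
    linarith
  -- contradiction
  have hmem : affinity p q (Tn n) ∈ (fun θ => affinity p q θ) '' {θ ∈ Θ | M < |θ|} :=
    Set.mem_image_of_mem _ ⟨(hTn n).1, hTnM⟩
  have hbdd : BddAbove ((fun θ => affinity p q θ) '' {θ ∈ Θ | M < |θ|}) := by
    refine ⟨rhohat, ?_⟩
    rintro x ⟨θ, hθ, rfl⟩
    exact hrhohat.1 (Set.mem_image_of_mem _ hθ.1)
  have := le_csSup hbdd hmem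
  have := hkey n
  linarith
end

section
/- Let B ⊆ Θ and suppose that for each k the map θ ↦ p_k(θ) is continuous on B. Then for every q ∈ Γ, the map θ ↦ HD(q,θ) is continuous on B. -/
open Filter Topology

/-- if each `θ ↦ p_k(θ)` is continuous on `B ⊆ Θ`, then for every `q ∈ Γ`
the map `θ ↦ HD(q,θ)` is continuous on `B`. -/
theorem stmt_19
    (Θ : Set ℝ) (p : ℝ → ℕ → ℝ) (B : Set ℝ)
    (hp : ∀ θ ∈ Θ, IsDistrib (p θ))
    (hB : B ⊆ Θ)
    (hpcont : ∀ k, ContinuousOn (fun θ => p θ k) B) :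
    ∀ q : ℕ → ℝ, IsDistrib q → ContinuousOn (fun θ => HDdist p q θ) B := by
  intro q hq θ₀ hθ₀
  have hqsum : Summable q := hq.2.summable
  set f : ℕ → ℝ → ℝ := fun k θ => (Real.sqrt (q k) - Real.sqrt (p θ k))^2 with hf
  have hfb : ∀ θ ∈ Θ, ∀ k, f k θ ≤ 2 * q k + 2 * p θ k := by
    intro θ hθ k
    have h1 := (hp θ hθ).1 k
    have h2 := hq.1 k
    show (Real.sqrt (q k) - Real.sqrt (p θ k))^2 ≤ 2 * q k + 2 * p θ k
    nlinarith [sq_nonneg (Real.sqrt (q k) + Real.sqrt (p θ k)),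
      Real.sq_sqrt h2, Real.sq_sqrt h1, Real.sqrt_nonneg (q k), Real.sqrt_nonneg (p θ k)]
  have hsumf : ∀ θ ∈ Θ, Summable (fun k => f k θ) := by
    intro θ hθ
    exact Summable.of_nonneg_of_le (fun k => sq_nonneg _) (hfb θ hθ)
      ((hqsum.mul_left 2).add (((hp θ hθ).2.summable).mul_left 2))
  rw [ContinuousWithinAt, Metric.tendsto_nhds]
  intro ε hε
  have hε16 : (0:ℝ) < ε/16 := by linarith
  have hq0 : Tendsto (fun N => ∑' k, q (k + N)) atTop (𝓝 0) := tendsto_sum_nat_add q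
  have hp0 : Tendsto (fun N => ∑' k, p θ₀ (k + N)) atTop (𝓝 0) := tendsto_sum_nat_add (p θ₀)
  obtain ⟨N, hN1, hN2⟩ :=
    ((hq0.eventually_lt_const hε16).and (hp0.eventually_lt_const hε16)).exists
  set S : ℝ → ℝ := fun θ => ∑ i ∈ Finset.range N, f i θ with hS
  set G : ℝ → ℝ := fun θ => 2 * (∑' k, q (k + N)) + 2 * (1 - ∑ i ∈ Finset.range N, p θ i) with hG
  have hSp : ∀ θ ∈ Θ, ∑' k, p θ (k + N) = 1 - ∑ i ∈ Finset.range N, p θ i := by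
    intro θ hθ
    have h1 := Summable.sum_add_tsum_nat_add (f := p θ) N (hp θ hθ).2.summable
    have h2 : ∑' k, p θ k = 1 := (hp θ hθ).2.tsum_eq
    linarith
  have hT : ∀ θ ∈ Θ, HDdist p q θ = S θ + ∑' k, f (k + N) θ := by
    intro θ hθ
    have := Summable.sum_add_tsum_nat_add (f := fun k => f k θ) N (hsumf θ hθ)
    simpa [HDdist, hS, hf] using this.symm
  have hTnn : ∀ θ, 0 ≤ ∑' k, f (k + N) θ := fun θ => tsum_nonneg (fun k => sq_nonneg _)
  have hTle : ∀ θ ∈ Θ, ∑' k, f (k + N) θ ≤ G θ := by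
    intro θ hθ
    have hqtail : Summable (fun k => q (k + N)) := (summable_nat_add_iff N).2 hqsum
    have hptail : Summable (fun k => p θ (k + N)) := (summable_nat_add_iff N).2 (hp θ hθ).2.summable
    have hle : ∑' k, f (k + N) θ ≤ ∑' k, (2 * q (k + N) + 2 * p θ (k + N)) :=
      Summable.tsum_le_tsum (fun k => hfb θ hθ (k + N))
        ((summable_nat_add_iff N).2 (hsumf θ hθ))
        ((hqtail.mul_left 2).add (hptail.mul_left 2))
    have heq : ∑' k, (2 * q (k + N) + 2 * p θ (k + N))
        = 2 * (∑' k, q (k + N)) + 2 * (∑' k, p θ (k + N)) := by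
      rw [Summable.tsum_add (hqtail.mul_left 2) (hptail.mul_left 2), tsum_mul_left, tsum_mul_left]
    rw [heq, hSp θ hθ] at hle
    exact hle
  have hGθ₀ : G θ₀ < ε/4 := by
    have h1 := hSp θ₀ (hB hθ₀)
    simp only [hG]
    rw [← h1]
    linarith
  have hScont : ContinuousWithinAt S B θ₀ := by
    refine (continuousOn_finset_sum (Finset.range N) (fun i _ => ?_)) θ₀ hθ₀
    exact (continuousOn_const.sub (Real.continuous_sqrt.comp_continuousOn (hpcont i))).pow 2
  have hGcont : ContinuousWithinAt G B θ₀ := by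
    refine (continuousOn_const.add (continuousOn_const.mul (continuousOn_const.sub
      (continuousOn_finset_sum (Finset.range N) (fun i _ => hpcont i))))) θ₀ hθ₀
  have evS : ∀ᶠ θ in 𝓝[B] θ₀, |S θ - S θ₀| < ε/4 := by
    have := (Metric.tendsto_nhds.1 hScont) (ε/4) (by linarith)
    simpa [Real.dist_eq] using this
  have evG : ∀ᶠ θ in 𝓝[B] θ₀, G θ < ε/4 := hGcont.eventually_lt_const hGθ₀
  have evB : ∀ᶠ θ in 𝓝[B] θ₀, θ ∈ B := eventually_mem_nhdsWithin
  filter_upwards [evS, evG, evB] with θ hSθ hGθ hθB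
  have hθΘ := hB hθB
  rw [Real.dist_eq, hT θ hθΘ, hT θ₀ (hB hθ₀)]
  have h1 : ∑' k, f (k + N) θ ≤ G θ := hTle θ hθΘ
  have h2 : ∑' k, f (k + N) θ₀ ≤ G θ₀ := hTle θ₀ (hB hθ₀)
  have h3 := abs_lt.1 hSθ
  rw [abs_lt]
  have t1 : ∑' (k : ℕ), f (k + N) θ < ε/4 := lt_of_le_of_lt h1 hGθ
  have t2 : ∑' (k : ℕ), f (k + N) θ₀ < ε/4 := lt_of_le_of_lt h2 hGθ₀
  have t3 := hTnn θ
  have t4 := hTnn θ₀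
  have t5 := h3.1
  have t6 := h3.2
  exact ⟨by linarith, by linarith⟩
end
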